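/- arXiv:2604.04619 — 3 statements merged into one kernel-verified Lean document; each statement's English description precedes it below -/
import Mathlib

section
/- Let G' = (V', E') be a simple, undirected, connected graph with n' ≥ 1 vertices, and let v₁, v₂, …, v_{n'} be an enumeration of its vertices in any order. For i ∈ {1, …, n'−1}, let f(i) = min{ d_{G'}(v_i, v_j) : j ∈ {i+1, …, n'} }. Then Σ_{i=1}^{n'−1} f(i) ≤ 2·n'·log₂ n'. -/
/-!
Fix `d ≥ 1`. Since `f i` is at most the distance from `v i` to every later vertex, the vertices
`v i` with `f i ≥ d` are pairwise at distance `≥ d`, so the balls of radius `(d - 1) / 2` around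
them are disjoint. In a connected graph on `n` vertices such a ball has at least `⌈d / 2⌉`
vertices, hence at most `n / ⌈d / 2⌉` indices satisfy `f i ≥ d`. Summing over `d < n`
(layer-cake) gives `∑ f i ≤ n ∑_{d < n} 1 / ⌈d / 2⌉ ≤ 2 n H_{⌊n / 2⌋} ≤ 2 n log₂ n`.
-/

open SimpleGraph Finset

namespace SimpleGraph

variable {V ι : Type*} {G : SimpleGraph V}

lemma Walk.dist_getVert_of_length_eq_dist {u w : V} {p : G.Walk u w}
    (hp : p.length = G.dist u w) {k : ℕ} (hk : k ≤ p.length) :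
    G.dist u (p.getVert k) = k := by
  rw [← length_eq_dist_of_subwalk hp (p.isSubwalk_take k), Walk.take_length, min_eq_left hk]

lemma Connected.exists_dist_eq (hconn : G.Connected) {u w : V} {k : ℕ}
    (hk : k ≤ G.dist u w) : ∃ x, G.dist u x = k := by
  obtain ⟨p, hp⟩ := hconn.exists_walk_length_eq_dist u w
  exact ⟨p.getVert k, p.dist_getVert_of_length_eq_dist hp (hp ▸ hk)⟩

lemma Connected.dist_lt_card [Fintype V] (hconn : G.Connected) (u w : V) :
    G.dist u w < Fintype.card V := by
  obtain ⟨p, hp, hlen⟩ := hconn.exists_path_of_dist u w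
  exact hlen ▸ hp.length_lt

variable [Fintype V]

lemma Connected.le_card_filter_dist_le (hconn : G.Connected) (c : V) {r : ℕ}
    (hr : r < Fintype.card V) : r + 1 ≤ #{x | G.dist c x ≤ r} := by
  by_cases hfar : ∃ u, r ≤ G.dist c u
  · obtain ⟨u, hu⟩ := hfar
    have hsub : range (r + 1) ⊆ image (G.dist c) {x | G.dist c x ≤ r} := by
      intro k hk
      have hkr : k ≤ r := Nat.lt_succ_iff.mp (mem_range.mp hk)
      obtain ⟨x, hx⟩ := hconn.exists_dist_eq (hu.trans' hkr)
      exact mem_image.mpr ⟨x, by simp [hx, hkr], hx⟩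
    simpa using (card_le_card hsub).trans card_image_le
  · push Not at hfar
    rw [filter_true_of_mem fun x _ => (hfar x).le, card_univ]
    exact hr

lemma Connected.card_mul_le_card_of_pairwise_lt_dist (hconn : G.Connected) {s : Finset ι}
    {v : ι → V} {r : ℕ} (hr : r < Fintype.card V)
    (hs : (s : Set ι).Pairwise fun i j => 2 * r < G.dist (v i) (v j)) :
    #s * (r + 1) ≤ Fintype.card V := by
  classical
  set ball : ι → Finset V := fun i => {x | G.dist (v i) x ≤ r}
  have hdisj : (s : Set ι).PairwiseDisjoint ball := by
    intro i hi j hj hij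
    refine Finset.disjoint_left.mpr fun x hxi hxj => ?_
    simp only [ball, mem_filter, mem_univ, true_and] at hxi hxj
    have := hconn.dist_triangle (u := v i) (v := x) (w := v j)
    rw [dist_comm (u := x)] at this
    have := hs hi hj hij
    omega
  calc #s * (r + 1) = ∑ _i ∈ s, (r + 1) := by rw [sum_const, smul_eq_mul]
    _ ≤ ∑ i ∈ s, #(ball i) := sum_le_sum fun i _ => hconn.le_card_filter_dist_le (v i) hr
    _ = #(s.biUnion ball) := (card_biUnion hdisj).symm
    _ ≤ Fintype.card V := card_le_univ _

end SimpleGraph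

lemma Finset.sum_eq_sum_Icc_card_filter_le {ι : Type*} {s : Finset ι} {f : ι → ℕ} {N : ℕ}
    (hf : ∀ i ∈ s, f i ≤ N) : ∑ i ∈ s, f i = ∑ d ∈ Icc 1 N, #{i ∈ s | d ≤ f i} := by
  have hfi : ∀ i ∈ s, f i = #((Icc 1 N).bipartiteAbove (fun i d => d ≤ f i) i) := by
    intro i hi
    have : (Icc 1 N).bipartiteAbove (fun i d => d ≤ f i) i = Icc 1 (f i) := by
      ext d
      simp only [mem_bipartiteAbove, mem_Icc]
      have := hf i hi
      omega
    rw [this, Nat.card_Icc, Nat.add_sub_cancel]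
  rw [sum_congr rfl hfi, sum_card_bipartiteAbove_eq_sum_card_bipartiteBelow]
  rfl

lemma sum_Icc_inv_succ_div_two (K : ℕ) :
    ∑ d ∈ Icc 1 (2 * K), (((d + 1) / 2 : ℕ) : ℝ)⁻¹ = 2 * harmonic K := by
  induction K with
  | zero => simp
  | succ K ih =>
    rw [show 2 * (K + 1) = 2 * K + 1 + 1 by ring, sum_Icc_succ_top (by omega),
      sum_Icc_succ_top (by omega), ih, harmonic_succ,
      show (2 * K + 1 + 1) / 2 = K + 1 by omega, show (2 * K + 1 + 1 + 1) / 2 = K + 1 by omega]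
    push_cast
    ring

lemma harmonic_div_two_le_logb (n : ℕ) : (harmonic (n / 2) : ℝ) ≤ Real.logb 2 n := by
  rcases Nat.eq_zero_or_pos (n / 2) with hK | hK
  · rw [hK, harmonic_zero, Rat.cast_zero]
    rcases Nat.eq_zero_or_pos n with rfl | hn
    · simp
    · exact Real.logb_nonneg one_lt_two (by exact_mod_cast hn)
  have hK' : (1 : ℝ) ≤ (n / 2 : ℕ) := by exact_mod_cast hK
  have hlog2 : Real.log 2 ≤ 1 := by linarith [Real.log_two_lt_d9]
  calc (harmonic (n / 2) : ℝ) ≤ 1 + Real.log (n / 2 : ℕ) := harmonic_le_one_add_log _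
    _ ≤ 1 + Real.logb 2 (n / 2 : ℕ) := by
      gcongr
      exact le_div_self (Real.log_nonneg hK') (Real.log_pos one_lt_two) hlog2
    _ = Real.logb 2 (2 * (n / 2 : ℕ)) := by
      rw [Real.logb_mul two_ne_zero (by positivity), Real.logb_self_eq_one one_lt_two]
    _ ≤ Real.logb 2 n := by
      gcongr
      · norm_num
      · exact_mod_cast Nat.mul_div_le n 2

lemma sum_le_two_mul_logb {n : ℕ} {a : ℕ → ℕ}
    (ha : ∀ d ∈ Icc 1 (n - 1), a d * ((d + 1) / 2) ≤ n) :
    ((∑ d ∈ Icc 1 (n - 1), a d : ℕ) : ℝ) ≤ 2 * n * Real.logb 2 n := by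
  push_cast
  calc ∑ d ∈ Icc 1 (n - 1), (a d : ℝ)
      ≤ ∑ d ∈ Icc 1 (n - 1), n * (((d + 1) / 2 : ℕ) : ℝ)⁻¹ := by
        refine sum_le_sum fun d hd => ?_
        have hd1 := (mem_Icc.mp hd).1
        rw [le_mul_inv_iff₀ (Nat.cast_pos.mpr (by omega))]
        exact_mod_cast ha d hd
    _ = n * ∑ d ∈ Icc 1 (n - 1), (((d + 1) / 2 : ℕ) : ℝ)⁻¹ := (mul_sum ..).symm
    _ ≤ n * ∑ d ∈ Icc 1 (2 * (n / 2)), (((d + 1) / 2 : ℕ) : ℝ)⁻¹ := by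
        gcongr
        omega
    _ = n * (2 * harmonic (n / 2)) := by rw [sum_Icc_inv_succ_div_two]
    _ ≤ n * (2 * Real.logb 2 n) := by gcongr; exact harmonic_div_two_le_logb n
    _ = 2 * n * Real.logb 2 n := by ring

theorem sum_min_dist_to_later_le_general {V : Type*} [Fintype V] (G : SimpleGraph V)
    (hconn : G.Connected) (n' : ℕ) (hcard : Fintype.card V = n')
    (v : Fin n' → V) :
    ((∑ i ∈ Finset.univ.filter (fun i : Fin n' => (i : ℕ) < n' - 1),
        sInf {d : ℕ | ∃ j : Fin n', i < j ∧ G.dist (v i) (v j) = d} : ℕ) : ℝ) ≤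
      2 * n' * Real.logb 2 n' := by
  set f : Fin n' → ℕ := fun i => sInf {d : ℕ | ∃ j : Fin n', i < j ∧ G.dist (v i) (v j) = d}
  have hf_le_dist : ∀ i j, i < j → f i ≤ G.dist (v i) (v j) :=
    fun i j hij => Nat.sInf_le ⟨j, hij, rfl⟩
  have hf_le : ∀ i ∈ univ.filter (fun i : Fin n' => (i : ℕ) < n' - 1), f i ≤ n' - 1 := by
    intro i hi
    have hi' := (mem_filter.mp hi).2
    have := hf_le_dist i ⟨i + 1, by omega⟩ (Fin.lt_def.mpr (Nat.lt_succ_self _))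
    have := hconn.dist_lt_card (v i) (v ⟨i + 1, by omega⟩)
    omega
  rw [sum_eq_sum_Icc_card_filter_le hf_le]
  refine sum_le_two_mul_logb fun d hd => ?_
  obtain ⟨hd1, hdn⟩ := mem_Icc.mp hd
  rw [show (d + 1) / 2 = (d - 1) / 2 + 1 by omega]
  refine (hconn.card_mul_le_card_of_pairwise_lt_dist (v := v) (by omega) ?_).trans hcard.le
  intro i hi j hj hij
  wlog hlt : i < j generalizing i j
  · rw [dist_comm]
    exact this hj hi hij.symm (hij.lt_or_gt.resolve_left hlt)
  have := hf_le_dist i j hlt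
  have := (mem_filter.mp hi).2
  omega

/-- Let `G'` be a simple, undirected, connected graph with `n' ≥ 1`
vertices, and let `v 0, v 1, …, v (n'-1)` be an enumeration of its vertices in any
order. For each index `i < n' − 1`, let `f(i)` be the minimum distance from `v i` to a
later vertex `v j` (`i < j`). Then `Σ_{i < n'−1} f(i) ≤ 2·n'·log₂ n'`. -/
theorem sum_min_dist_to_later_le {V : Type*} [Fintype V] (G : SimpleGraph V)
    (hconn : G.Connected) (n' : ℕ) (hn' : 1 ≤ n') (hcard : Fintype.card V = n')
    (v : Fin n' → V) (hv : Function.Bijective v) :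
    ((∑ i ∈ Finset.univ.filter (fun i : Fin n' => (i : ℕ) < n' - 1),
        sInf {d : ℕ | ∃ j : Fin n', i < j ∧ G.dist (v i) (v j) = d} : ℕ) : ℝ) ≤
      2 * n' * Real.logb 2 n' :=
  sum_min_dist_to_later_le_general G hconn n' hcard v
end

section
/- For every real number n ≥ 1 and every real number k > 0 with k ≥ 2·ln n, it holds that n^{1+1/k} ≤ n + (2·n·ln n)/k. -/
/-- For every real `n ≥ 1` and real `k > 0` with `k ≥ 2·ln n`,
`n^(1+1/k) ≤ n + (2·n·ln n)/k`. -/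
theorem rpow_one_add_inv_le (n k : ℝ) (hn : 1 ≤ n) (hk : 0 < k)
    (hk2 : 2 * Real.log n ≤ k) :
    n ^ (1 + 1 / k) ≤ n + 2 * n * Real.log n / k := by
  have hn0 : (0:ℝ) < n := lt_of_lt_of_le one_pos hn
  have hlog : 0 ≤ Real.log n := Real.log_nonneg hn
  set x : ℝ := Real.log n / k with hxdef
  have hx0 : 0 ≤ x := div_nonneg hlog hk.le
  have hxhalf : x ≤ 1 / 2 := by
    rw [hxdef, div_le_div_iff₀ hk two_pos]
    linarith
  have h1mx : (0:ℝ) < 1 - x := by linarith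
  -- exp x ≤ 1 / (1 - x)
  have hexp : Real.exp x ≤ 1 / (1 - x) := by
    rw [le_div_iff₀ h1mx]
    have h := Real.add_one_le_exp (-x)
    calc Real.exp x * (1 - x) ≤ Real.exp x * Real.exp (-x) := by
          apply mul_le_mul_of_nonneg_left _ (Real.exp_pos x).le
          linarith
      _ = 1 := by rw [← Real.exp_add]; simp
  have hexp2 : Real.exp x ≤ 1 + 2 * x := by
    refine hexp.trans ?_
    rw [div_le_iff₀ h1mx]
    nlinarith
  have hrw : n ^ (1 + 1 / k) = n * Real.exp x := by
    rw [Real.rpow_def_of_pos hn0]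
    rw [mul_add, mul_one, Real.exp_add, Real.exp_log hn0, hxdef]
    ring_nf
  rw [hrw]
  calc n * Real.exp x ≤ n * (1 + 2 * x) :=
        mul_le_mul_of_nonneg_left hexp2 hn0.le
    _ = n + 2 * n * Real.log n / k := by rw [hxdef]; ring
end

section
/- For every real number n ≥ 3 and every real number ε > 0, Σ_{k} n^{1+1/k} ≤ (3ε+1)·n^{1+1/ε}, where the sum ranges over all integers k with ε ≤ k ≤ 2·ln n. -/
/-!
Split the range at `2ε`. The at most `ε + 1` indices `k ∈ [ε, 2ε]` contribute at most
`n^(1+1/ε)` each. The at most `2 ln n` indices `k > 2ε` contribute at most `n^(1+1/(2ε))` each,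
and `ln n ≤ ε n^(1/(2ε))` (from `ln y ≤ y / e` applied to `y = n^(1/(2ε))`) turns their total
into at most `2ε n^(1+1/ε)`.
-/

open Finset Real

lemma log_le_div_exp_one {y : ℝ} (hy : 0 < y) : log y ≤ y / exp 1 := by
  have h := log_le_sub_one_of_pos (div_pos hy (exp_pos 1))
  rw [log_div hy.ne' (exp_pos 1).ne', log_exp] at h
  linarith

-- Sharper than `Real.log_le_rpow_div` by the factor `e`, which the bound below needs.
lemma log_le_rpow_div_exp_one_mul {x δ : ℝ} (hx : 0 < x) (hδ : 0 < δ) :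
    log x ≤ x ^ δ / (exp 1 * δ) := by
  have h := log_le_div_exp_one (rpow_pos_of_pos hx δ)
  rw [log_rpow hx, le_div_iff₀ (exp_pos 1)] at h
  rw [le_div_iff₀ (by positivity)]
  linarith

lemma log_le_mul_rpow_one_div_two_mul {x ε : ℝ} (hx : 0 < x) (hε : 0 < ε) :
    log x ≤ ε * x ^ (1 / (2 * ε)) :=
  calc log x ≤ x ^ (1 / (2 * ε)) / (exp 1 * (1 / (2 * ε))) :=
        log_le_rpow_div_exp_one_mul hx (by positivity)
    _ = 2 / exp 1 * (ε * x ^ (1 / (2 * ε))) := by field_simp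
    _ ≤ 1 * (ε * x ^ (1 / (2 * ε))) := by
        gcongr
        exact (div_le_one (exp_pos 1)).2 exp_one_gt_two.le
    _ = ε * x ^ (1 / (2 * ε)) := one_mul _

lemma natCast_card_Icc_ceil_floor_le {x y : ℝ} (hx : 0 ≤ x) (hxy : x ≤ y) :
    (#(Icc ⌈x⌉₊ ⌊y⌋₊) : ℝ) ≤ y - x + 1 := by
  rw [Nat.card_Icc]
  rcases le_or_gt ⌈x⌉₊ (⌊y⌋₊ + 1) with h | h
  · rw [Nat.cast_sub h]
    push_cast
    linarith [Nat.le_ceil x, Nat.floor_le (hx.trans hxy)]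
  · rw [Nat.sub_eq_zero_of_le h.le, Nat.cast_zero]
    linarith

lemma sum_Icc_le_sum_Icc_add_sum_Icc_succ {M : Type*} [AddCommMonoid M] [Preorder M]
    [AddLeftMono M] {f : ℕ → M} (hf : ∀ k, 0 ≤ f k) (a b m : ℕ) :
    ∑ k ∈ Icc a m, f k ≤ ∑ k ∈ Icc a b, f k + ∑ k ∈ Icc (b + 1) m, f k := by
  have hdisj : Disjoint (Icc a b) (Icc (b + 1) m) :=
    disjoint_left.2 fun k hk hk' => by simp only [mem_Icc] at hk hk'; omega
  rw [← sum_union hdisj]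
  refine sum_le_sum_of_subset_of_nonneg (fun k hk => ?_) fun k _ _ => hf k
  simp only [mem_union, mem_Icc] at hk ⊢
  omega

lemma rpow_one_add_one_div_le_of_le {n x y : ℝ} (hn : 1 ≤ n) (hx : 0 < x) (hxy : x ≤ y) :
    n ^ (1 + 1 / y) ≤ n ^ (1 + 1 / x) :=
  rpow_le_rpow_of_exponent_le hn (by gcongr)

lemma sum_Icc_ceil_floor_rpow_le {n x y : ℝ} (hn : 1 ≤ n) (hx : 0 < x) (hxy : x ≤ y) :
    ∑ k ∈ Icc ⌈x⌉₊ ⌊y⌋₊, n ^ (1 + 1 / (k : ℝ)) ≤ (y - x + 1) * n ^ (1 + 1 / x) := by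
  have hterm : ∀ k ∈ Icc ⌈x⌉₊ ⌊y⌋₊, n ^ (1 + 1 / (k : ℝ)) ≤ n ^ (1 + 1 / x) := fun k hk =>
    rpow_one_add_one_div_le_of_le hn hx (Nat.ceil_le.1 (mem_Icc.1 hk).1)
  calc ∑ k ∈ Icc ⌈x⌉₊ ⌊y⌋₊, n ^ (1 + 1 / (k : ℝ))
      ≤ #(Icc ⌈x⌉₊ ⌊y⌋₊) * n ^ (1 + 1 / x) := by
        simpa only [nsmul_eq_mul] using sum_le_card_nsmul _ _ _ hterm
    _ ≤ (y - x + 1) * n ^ (1 + 1 / x) := by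
        gcongr
        exact natCast_card_Icc_ceil_floor_le hx.le hxy

lemma sum_Icc_floor_succ_rpow_le {n y : ℝ} (hn : 1 ≤ n) (hy : 0 < y) (m : ℕ) :
    ∑ k ∈ Icc (⌊y⌋₊ + 1) m, n ^ (1 + 1 / (k : ℝ)) ≤ m * n ^ (1 + 1 / y) := by
  have hterm : ∀ k ∈ Icc (⌊y⌋₊ + 1) m, n ^ (1 + 1 / (k : ℝ)) ≤ n ^ (1 + 1 / y) := fun k hk =>
    rpow_one_add_one_div_le_of_le hn hy
      ((Nat.lt_floor_add_one y).trans_le (by exact_mod_cast (mem_Icc.1 hk).1)).le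
  calc ∑ k ∈ Icc (⌊y⌋₊ + 1) m, n ^ (1 + 1 / (k : ℝ))
      ≤ #(Icc (⌊y⌋₊ + 1) m) * n ^ (1 + 1 / y) := by
        simpa only [nsmul_eq_mul] using sum_le_card_nsmul _ _ _ hterm
    _ ≤ m * n ^ (1 + 1 / y) := by
        gcongr
        rw [Nat.card_Icc]
        omega

/-- For every real `n ≥ 3` and every real `ε > 0`,
`Σ_k n^(1+1/k) ≤ (3ε+1)·n^(1+1/ε)`, the sum being over all (positive) integers `k`
with `ε ≤ k ≤ 2·ln n`. -/
theorem sum_rpow_harmonic_exponent_le (n ε : ℝ) (hn : 3 ≤ n) (hε : 0 < ε) :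
    ∑ k ∈ Finset.Icc ⌈ε⌉₊ ⌊2 * Real.log n⌋₊, n ^ (1 + 1 / (k : ℝ)) ≤
      (3 * ε + 1) * n ^ (1 + 1 / ε) := by
  have hn1 : 1 ≤ n := by linarith
  have hn0 : 0 < n := by linarith
  set M := ⌊2 * log n⌋₊
  have hM : (M : ℝ) ≤ 2 * (ε * n ^ (1 / (2 * ε))) :=
    (Nat.floor_le (mul_nonneg two_pos.le (log_nonneg hn1))).trans
      (by gcongr; exact log_le_mul_rpow_one_div_two_mul hn0 hε)
  have hsplit : n ^ (1 / (2 * ε)) * n ^ (1 + 1 / (2 * ε)) = n ^ (1 + 1 / ε) := by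
    rw [← rpow_add hn0]
    congr 1
    field_simp
    ring
  calc ∑ k ∈ Icc ⌈ε⌉₊ M, n ^ (1 + 1 / (k : ℝ))
      ≤ ∑ k ∈ Icc ⌈ε⌉₊ ⌊2 * ε⌋₊, n ^ (1 + 1 / (k : ℝ))
        + ∑ k ∈ Icc (⌊2 * ε⌋₊ + 1) M, n ^ (1 + 1 / (k : ℝ)) :=
        sum_Icc_le_sum_Icc_add_sum_Icc_succ (fun k => (rpow_pos_of_pos hn0 _).le) _ _ _
    _ ≤ (2 * ε - ε + 1) * n ^ (1 + 1 / ε) + M * n ^ (1 + 1 / (2 * ε)) :=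
        add_le_add (sum_Icc_ceil_floor_rpow_le hn1 hε (by linarith))
          (sum_Icc_floor_succ_rpow_le hn1 (by positivity) M)
    _ ≤ (2 * ε - ε + 1) * n ^ (1 + 1 / ε)
        + 2 * (ε * n ^ (1 / (2 * ε))) * n ^ (1 + 1 / (2 * ε)) := by
        gcongr
    _ = (3 * ε + 1) * n ^ (1 + 1 / ε) := by
        rw [mul_assoc, mul_assoc, hsplit]
        ring
end
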